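/- Let α > 0, let (π_k)_{k≥1} be GEM(α) stick-breaking weights built from an i.i.d. sequence of Beta(1,α) random variables, and let (X_k)_{k≥1} be a sequence of random elements of a measurable space E, independent of the stick sequence, such that all the X_k are identically distributed and, for every pair of distinct indices k1 ≠ k2, the pair (X_{k1}, X_{k2}) has the same joint distribution as (X_1, X_2). Then for all measurable functions f1, f2 : E → [0,∞], E[∑_{k1≥1} ∑_{k2≥1} π_{k1} π_{k2} f1(X_{k1}) f2(X_{k2})] = q1 · E[f1(X_1) f2(X_1)] + (1 − q1) · E[f1(X_1) f2(X_2)], where q1 = 1/(1+α). (This is the mixed-moment identity of Proposition 1, with E playing the role of the space of probability measures and X_k the role of the component distributions G*_k.) -/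

import Mathlib

open MeasureTheory ProbabilityTheory
open scoped ENNReal

/-- The Beta(1, γ) distribution on [0,1]: density `x ↦ γ (1-x)^(γ-1)` w.r.t. Lebesgue
measure on `[0,1]`. -/
noncomputable def betaOne (γ : ℝ) : Measure ℝ :=
  (volume.restrict (Set.Icc (0:ℝ) 1)).withDensity
    fun x => ENNReal.ofReal (γ * (1 - x) ^ (γ - 1))

/-- Stick-breaking weights (0-indexed): `stick V k = V k * ∏_{i<k} (1 - V i)`. -/
noncomputable def stick {Ω : Type*} (V : ℕ → Ω → ℝ) (k : ℕ) (x : Ω) : ℝ :=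
  V k x * ∏ i ∈ Finset.range k, (1 - V i x)

/-!
Independence of the sticks from the atoms factors each term as
`E[π_i π_j] · E[f1(X_i) f2(X_j)]`, and the second factor only depends on whether `i = j`.
The diagonal weight `∑ E[π_k²] = E[V²] ∑ E[(1-V)²]^k = 1/(1+α)` is a geometric series.
The off-diagonal weight is its complement, since the total weight `E[(∑ π_k)²]` is `1`:
the partial sums of the sticks are `1 - ∏_{i<n} (1 - V_i) ≤ 1`, while
`E[∑ π_k] = E[V] ∑ E[1-V]^k = 1`, so `∑ π_k = 1` almost surely.
-/

open Set

lemma integral_one_sub_rpow {r : ℝ} (hr : -1 < r) :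
    ∫ v in (0:ℝ)..1, (1 - v) ^ r = 1 / (r + 1) := by
  rw [intervalIntegral.integral_comp_sub_left (fun u : ℝ => u ^ r), sub_self, sub_zero,
    integral_rpow (Or.inl hr), Real.one_rpow, Real.zero_rpow (by linarith), sub_zero]

lemma intervalIntegrable_one_sub_rpow {r : ℝ} (hr : -1 < r) :
    IntervalIntegrable (fun v : ℝ => (1 - v) ^ r) volume 0 1 := by
  simpa using
    ((intervalIntegral.intervalIntegrable_rpow' (a := 0) (b := 1) hr).comp_sub_left 1).symm

lemma ENNReal.eq_ofReal_sub_of_add_eq {a : ℝ≥0∞} {b c : ℝ} (hc : 0 ≤ c)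
    (h : a + ENNReal.ofReal c = ENNReal.ofReal b) : a = ENNReal.ofReal (b - c) := by
  rw [ENNReal.ofReal_sub _ hc]
  exact ENNReal.eq_sub_of_add_eq ENNReal.ofReal_ne_top h

section Beta

variable {α : ℝ}

lemma ae_mem_Icc_betaOne (α : ℝ) : ∀ᵐ v ∂betaOne α, v ∈ Icc (0 : ℝ) 1 :=
  (withDensity_absolutelyContinuous _ _).ae_le (ae_restrict_mem measurableSet_Icc)

lemma lintegral_betaOne_one_sub_pow (hα : 0 < α) (n : ℕ) :
    ∫⁻ v, ENNReal.ofReal ((1 - v) ^ n) ∂betaOne α = ENNReal.ofReal (α / (α + n)) := by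
  have hr : -1 < α - 1 + n := by linarith [(n.cast_nonneg : (0 : ℝ) ≤ n)]
  have hdensity : ∀ v ∈ Icc (0 : ℝ) 1, ENNReal.ofReal (α * (1 - v) ^ (α - 1)) *
      ENNReal.ofReal ((1 - v) ^ n) = ENNReal.ofReal (α * (1 - v) ^ (α - 1 + n)) := fun v hv => by
    have h1 : 0 ≤ 1 - v := by linarith [hv.2]
    rw [← ENNReal.ofReal_mul (by positivity), mul_assoc]
    rcases n.eq_zero_or_pos with rfl | hn
    · simp
    · rw [Real.rpow_add_natCast' h1 (by linarith [(Nat.one_le_cast.2 hn : (1 : ℝ) ≤ n)])]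
  have hint : IntegrableOn (fun v => α * (1 - v) ^ (α - 1 + n)) (Icc 0 1) :=
    (intervalIntegrable_iff_integrableOn_Icc_of_le zero_le_one).1
      ((intervalIntegrable_one_sub_rpow hr).const_mul α)
  rw [betaOne, lintegral_withDensity_eq_lintegral_mul _ (by fun_prop) (by fun_prop)]
  simp only [Pi.mul_apply]
  rw [setLIntegral_congr_fun measurableSet_Icc hdensity,
    ← ofReal_integral_eq_lintegral_ofReal hint, integral_Icc_eq_integral_Ioc,
    ← intervalIntegral.integral_of_le zero_le_one, intervalIntegral.integral_const_mul,
    integral_one_sub_rpow hr]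
  · congr 1; ring_nf
  · filter_upwards [ae_restrict_mem measurableSet_Icc] with v hv
    have : 0 ≤ 1 - v := by linarith [hv.2]
    positivity

lemma lintegral_betaOne_add {g h : ℝ → ℝ} (hg : Measurable g)
    (hg0 : ∀ v ∈ Icc (0 : ℝ) 1, 0 ≤ g v) (hh0 : ∀ v ∈ Icc (0 : ℝ) 1, 0 ≤ h v) :
    ∫⁻ v, ENNReal.ofReal (g v + h v) ∂betaOne α
      = ∫⁻ v, ENNReal.ofReal (g v) ∂betaOne α + ∫⁻ v, ENNReal.ofReal (h v) ∂betaOne α := by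
  rw [← lintegral_add_left hg.ennreal_ofReal]
  refine lintegral_congr_ae ?_
  filter_upwards [ae_mem_Icc_betaOne α] with v hv
  exact ENNReal.ofReal_add (hg0 v hv) (hh0 v hv)

lemma one_sub_pow_nonneg_of_mem_Icc {v : ℝ} (hv : v ∈ Icc (0 : ℝ) 1) (n : ℕ) :
    0 ≤ (1 - v) ^ n :=
  pow_nonneg (sub_nonneg.2 hv.2) n

/- Moments of `v` reduce to moments of `1 - v`, since `v + (1 - v) = 1` and
`v ^ 2 + 2 (1 - v) = 1 + (1 - v) ^ 2`. -/
lemma lintegral_betaOne_id (hα : 0 < α) :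
    ∫⁻ v, ENNReal.ofReal v ∂betaOne α = ENNReal.ofReal (1 / (1 + α)) := by
  have hsplit : ∫⁻ v, ENNReal.ofReal v ∂betaOne α + ∫⁻ v, ENNReal.ofReal ((1 - v) ^ 1) ∂betaOne α
      = ∫⁻ v, ENNReal.ofReal ((1 - v) ^ 0) ∂betaOne α := by
    rw [← lintegral_betaOne_add measurable_id' (fun v hv => hv.1)
      (fun v hv => one_sub_pow_nonneg_of_mem_Icc hv 1)]
    simp
  rw [lintegral_betaOne_one_sub_pow hα, lintegral_betaOne_one_sub_pow hα] at hsplit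
  rw [ENNReal.eq_ofReal_sub_of_add_eq (by positivity) hsplit]
  congr 1
  field_simp
  ring

lemma lintegral_betaOne_sq (hα : 0 < α) :
    ∫⁻ v, ENNReal.ofReal (v ^ 2) ∂betaOne α = ENNReal.ofReal (2 / ((1 + α) * (2 + α))) := by
  have hsplit : ∫⁻ v, ENNReal.ofReal (v ^ 2) ∂betaOne α
        + (∫⁻ v, ENNReal.ofReal ((1 - v) ^ 1) ∂betaOne α
          + ∫⁻ v, ENNReal.ofReal ((1 - v) ^ 1) ∂betaOne α)
      = ∫⁻ v, ENNReal.ofReal ((1 - v) ^ 0) ∂betaOne α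
        + ∫⁻ v, ENNReal.ofReal ((1 - v) ^ 2) ∂betaOne α := by
    rw [← lintegral_betaOne_add (by fun_prop) (fun v hv => one_sub_pow_nonneg_of_mem_Icc hv 1)
        (fun v hv => one_sub_pow_nonneg_of_mem_Icc hv 1),
      ← lintegral_betaOne_add (by fun_prop) (fun v hv => sq_nonneg v)
        (fun v hv => add_nonneg (one_sub_pow_nonneg_of_mem_Icc hv 1)
          (one_sub_pow_nonneg_of_mem_Icc hv 1)),
      ← lintegral_betaOne_add (by fun_prop) (fun v hv => one_sub_pow_nonneg_of_mem_Icc hv 0)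
        (fun v hv => one_sub_pow_nonneg_of_mem_Icc hv 2)]
    congr 1; ext v; congr 1; ring
  rw [lintegral_betaOne_one_sub_pow hα, lintegral_betaOne_one_sub_pow hα,
    lintegral_betaOne_one_sub_pow hα, ← ENNReal.ofReal_add (by positivity) (by positivity),
    ← ENNReal.ofReal_add (by positivity) (by positivity)] at hsplit
  rw [ENNReal.eq_ofReal_sub_of_add_eq (by positivity) hsplit]
  congr 1
  field_simp
  ring

end Beta

lemma ENNReal.tsum_ofReal_mul_pow {c r : ℝ} (hc : 0 ≤ c) (hr0 : 0 ≤ r) (hr1 : r < 1) :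
    ∑' k : ℕ, ENNReal.ofReal c * ENNReal.ofReal r ^ k = ENNReal.ofReal (c / (1 - r)) := by
  rw [ENNReal.tsum_mul_left, ENNReal.tsum_geometric, ← ENNReal.ofReal_one,
    ← ENNReal.ofReal_sub 1 hr0, ← ENNReal.ofReal_inv_of_pos (sub_pos.2 hr1),
    ← ENNReal.ofReal_mul hc, div_eq_mul_inv]

lemma ENNReal.tsum_tsum_mul_ite_eq {β : Type*} [DecidableEq β] (W : β → β → ℝ≥0∞)
    (a b : ℝ≥0∞) :
    ∑' (i : β) (j : β), W i j * (if i = j then a else b)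
      = (∑' i, W i i) * a + (∑' (i : β) (j : β), if i = j then 0 else W i j) * b := by
  have hsplit : ∀ i j, W i j * (if i = j then a else b)
      = (if j = i then W i j else 0) * a + (if i = j then 0 else W i j) * b := by
    intro i j
    by_cases h : i = j
    · subst h; simp
    · simp [h, Ne.symm h]
  simp_rw [hsplit, ENNReal.tsum_add, ENNReal.tsum_mul_right, tsum_ite_eq]

lemma ENNReal.tsum_tsum_eq_diag_add {β : Type*} [DecidableEq β] (W : β → β → ℝ≥0∞) :
    ∑' (i : β) (j : β), W i j = ∑' i, W i i + ∑' (i : β) (j : β), if i = j then 0 else W i j := by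
  simpa using ENNReal.tsum_tsum_mul_ite_eq W 1 1

section Stick

lemma sum_range_stick {Ω : Type*} (V : ℕ → Ω → ℝ) (n : ℕ) (x : Ω) :
    ∑ k ∈ Finset.range n, stick V k x = 1 - ∏ i ∈ Finset.range n, (1 - V i x) := by
  induction n with
  | zero => simp
  | succ n ih => rw [Finset.sum_range_succ, ih, Finset.prod_range_succ, stick]; ring

variable {Ω : Type*} {V : ℕ → Ω → ℝ} {x : Ω}

lemma stick_nonneg (hx : ∀ i, V i x ∈ Icc (0 : ℝ) 1) (k : ℕ) : 0 ≤ stick V k x :=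
  mul_nonneg (hx k).1 (Finset.prod_nonneg fun i _ => sub_nonneg.2 (hx i).2)

lemma tsum_ofReal_stick_le_one (hx : ∀ i, V i x ∈ Icc (0 : ℝ) 1) :
    ∑' k, ENNReal.ofReal (stick V k x) ≤ 1 := by
  refine ENNReal.tsum_le_of_sum_range_le fun n => ?_
  rw [← ENNReal.ofReal_sum_of_nonneg fun k _ => stick_nonneg hx k, sum_range_stick]
  exact ENNReal.ofReal_le_one.2
    (sub_le_self _ (Finset.prod_nonneg fun i _ => sub_nonneg.2 (hx i).2))

lemma ofReal_stick_pow (hx : ∀ i, V i x ∈ Icc (0 : ℝ) 1) (m k : ℕ) :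
    ENNReal.ofReal (stick V k x ^ m)
      = ENNReal.ofReal (V k x ^ m) * ∏ i ∈ Finset.range k, ENNReal.ofReal ((1 - V i x) ^ m) := by
  rw [stick, mul_pow, ← Finset.prod_pow, ENNReal.ofReal_mul (pow_nonneg (hx k).1 m),
    ENNReal.ofReal_prod_of_nonneg fun i _ => pow_nonneg (sub_nonneg.2 (hx i).2) m]

lemma measurable_stick [MeasurableSpace Ω] (hmV : ∀ k, Measurable (V k)) (k : ℕ) :
    Measurable (stick V k) :=
  (hmV k).mul (Finset.measurable_prod _ fun i _ => measurable_const.sub (hmV i))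

end Stick

section StickBreaking

variable {Ω : Type*} [MeasurableSpace Ω] {μ : Measure Ω} {V : ℕ → Ω → ℝ}

lemma lintegral_ofReal_stick_pow {ν : Measure ℝ} (hmV : ∀ k, Measurable (V k))
    (hindepV : iIndepFun V μ) (hlaw : ∀ k, μ.map (V k) = ν)
    (hV01 : ∀ᵐ x ∂μ, ∀ i, V i x ∈ Icc (0 : ℝ) 1) (m k : ℕ) :
    ∫⁻ x, ENNReal.ofReal (stick V k x ^ m) ∂μ
      = (∫⁻ v, ENNReal.ofReal (v ^ m) ∂ν) * (∫⁻ v, ENNReal.ofReal ((1 - v) ^ m) ∂ν) ^ k := by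
  set φ : ℕ → ℝ → ℝ≥0∞ := fun i =>
    if i = k then fun v => ENNReal.ofReal (v ^ m) else fun v => ENNReal.ofReal ((1 - v) ^ m)
  have hφ : ∀ i, Measurable (φ i) := fun i => by
    simp only [φ]; split_ifs <;> fun_prop
  have hφ_lt : ∀ i ∈ Finset.range k, φ i = fun v => ENNReal.ofReal ((1 - v) ^ m) :=
    fun i hi => if_neg (Finset.mem_range.1 hi).ne
  have hφ_eq : φ k = fun v => ENNReal.ofReal (v ^ m) := if_pos rfl
  have hprod : ∀ y : ℕ → ℝ, ∏ i ∈ Finset.range (k + 1), φ i (y i)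
      = ENNReal.ofReal (y k ^ m) * ∏ i ∈ Finset.range k, ENNReal.ofReal ((1 - y i) ^ m) := by
    intro y
    rw [Finset.prod_range_succ, mul_comm, hφ_eq]
    exact congrArg _ (Finset.prod_congr rfl fun i hi => by rw [hφ_lt i hi])
  have hlaw' : ∀ i, ∫⁻ x, φ i (V i x) ∂μ = ∫⁻ v, φ i v ∂ν := fun i => by
    rw [← hlaw i, lintegral_map (hφ i) (hmV i)]
  calc ∫⁻ x, ENNReal.ofReal (stick V k x ^ m) ∂μ
      = ∫⁻ x, ∏ i ∈ Finset.range (k + 1), φ i (V i x) ∂μ :=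
        lintegral_congr_ae (hV01.mono fun x hx => by
          simp only [ofReal_stick_pow hx, hprod fun i => V i x])
    _ = ∏ i ∈ Finset.range (k + 1), ∫⁻ v, φ i v ∂ν := by
        rw [lintegral_prod_eq_prod_lintegral_of_indepFun _ (fun i x => φ i (V i x))
          (hindepV.comp φ hφ) fun i => (hφ i).comp (hmV i)]
        exact Finset.prod_congr rfl fun i _ => hlaw' i
    _ = _ := by
        rw [Finset.prod_range_succ, mul_comm, hφ_eq,
          Finset.prod_congr rfl fun i hi => by rw [hφ_lt i hi], Finset.prod_const,
          Finset.card_range]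

variable {α : ℝ}

lemma ae_forall_mem_Icc_of_map_eq_betaOne (hmV : ∀ k, Measurable (V k))
    (hlawV : ∀ k, μ.map (V k) = betaOne α) : ∀ᵐ x ∂μ, ∀ i, V i x ∈ Icc (0 : ℝ) 1 :=
  ae_all_iff.2 fun i => ae_of_ae_map (hmV i).aemeasurable (hlawV i ▸ ae_mem_Icc_betaOne α)

lemma tsum_lintegral_ofReal_stick (hα : 0 < α) (hmV : ∀ k, Measurable (V k))
    (hindepV : iIndepFun V μ) (hlawV : ∀ k, μ.map (V k) = betaOne α) :
    ∑' k, ∫⁻ x, ENNReal.ofReal (stick V k x) ∂μ = 1 := by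
  have hmoment := lintegral_ofReal_stick_pow hmV hindepV hlawV
    (ae_forall_mem_Icc_of_map_eq_betaOne hmV hlawV) 1
  have hq := lintegral_betaOne_one_sub_pow hα 1
  simp only [pow_one, Nat.cast_one] at hmoment hq
  simp_rw [hmoment, lintegral_betaOne_id hα, hq]
  rw [ENNReal.tsum_ofReal_mul_pow (by positivity) (by positivity)
    ((div_lt_one (by positivity)).2 (by linarith)), ← ENNReal.ofReal_one]
  congr 1
  field_simp
  ring

lemma tsum_lintegral_ofReal_stick_mul_self (hα : 0 < α) (hmV : ∀ k, Measurable (V k))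
    (hindepV : iIndepFun V μ) (hlawV : ∀ k, μ.map (V k) = betaOne α) :
    ∑' k, ∫⁻ x, ENNReal.ofReal (stick V k x * stick V k x) ∂μ
      = ENNReal.ofReal (1 / (1 + α)) := by
  simp_rw [← sq, lintegral_ofReal_stick_pow hmV hindepV hlawV
    (ae_forall_mem_Icc_of_map_eq_betaOne hmV hlawV) 2, lintegral_betaOne_sq hα,
    lintegral_betaOne_one_sub_pow hα]
  rw [ENNReal.tsum_ofReal_mul_pow (by positivity) (by positivity)
    ((div_lt_one (by positivity)).2 (by push_cast; linarith))]
  congr 1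
  field_simp
  ring

lemma ae_tsum_ofReal_stick_eq_one [IsProbabilityMeasure μ] (hα : 0 < α)
    (hmV : ∀ k, Measurable (V k)) (hindepV : iIndepFun V μ) (hlawV : ∀ k, μ.map (V k) = betaOne α) :
    ∀ᵐ x ∂μ, ∑' k, ENNReal.ofReal (stick V k x) = 1 := by
  have hmass : ∫⁻ x, ∑' k, ENNReal.ofReal (stick V k x) ∂μ = 1 := by
    rw [lintegral_tsum fun k => (measurable_stick hmV k).ennreal_ofReal.aemeasurable,
      tsum_lintegral_ofReal_stick hα hmV hindepV hlawV]
  refine ae_eq_of_ae_le_of_lintegral_le ?_ (by simp [hmass]) aemeasurable_const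
    (by simp [hmass])
  filter_upwards [ae_forall_mem_Icc_of_map_eq_betaOne hmV hlawV] with x hx
  exact tsum_ofReal_stick_le_one hx

lemma tsum_tsum_lintegral_ofReal_stick_mul [IsProbabilityMeasure μ] (hα : 0 < α)
    (hmV : ∀ k, Measurable (V k)) (hindepV : iIndepFun V μ) (hlawV : ∀ k, μ.map (V k) = betaOne α) :
    ∑' (i : ℕ) (j : ℕ), ∫⁻ x, ENNReal.ofReal (stick V i x * stick V j x) ∂μ = 1 := by
  have hm : ∀ i j, Measurable fun x => ENNReal.ofReal (stick V i x * stick V j x) :=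
    fun i j => ((measurable_stick hmV i).mul (measurable_stick hmV j)).ennreal_ofReal
  simp_rw [← lintegral_tsum fun j => (hm _ j).aemeasurable]
  rw [← lintegral_tsum fun i => (Measurable.tsum fun j => hm i j).aemeasurable]
  trans ∫⁻ _, 1 ∂μ
  · refine lintegral_congr_ae ?_
    filter_upwards [ae_forall_mem_Icc_of_map_eq_betaOne hmV hlawV,
      ae_tsum_ofReal_stick_eq_one hα hmV hindepV hlawV] with x hx hsum
    simp only [ENNReal.ofReal_mul (stick_nonneg hx _), ENNReal.tsum_mul_left, hsum, mul_one]
  · simp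

lemma tsum_tsum_lintegral_ofReal_stick_mul_of_ne [IsProbabilityMeasure μ] (hα : 0 < α)
    (hmV : ∀ k, Measurable (V k)) (hindepV : iIndepFun V μ) (hlawV : ∀ k, μ.map (V k) = betaOne α) :
    ∑' (i : ℕ) (j : ℕ),
        (if i = j then 0 else ∫⁻ x, ENNReal.ofReal (stick V i x * stick V j x) ∂μ)
      = ENNReal.ofReal (1 - 1 / (1 + α)) := by
  have htotal := ENNReal.tsum_tsum_eq_diag_add
    fun i j => ∫⁻ x, ENNReal.ofReal (stick V i x * stick V j x) ∂μ
  rw [tsum_tsum_lintegral_ofReal_stick_mul hα hmV hindepV hlawV,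
    tsum_lintegral_ofReal_stick_mul_self hα hmV hindepV hlawV, add_comm,
    ← ENNReal.ofReal_one] at htotal
  exact ENNReal.eq_ofReal_sub_of_add_eq (by positivity) htotal.symm

lemma lintegral_ofReal_stick_mul_mul {E : Type*} [MeasurableSpace E] {X : ℕ → Ω → E}
    (hmV : ∀ k, Measurable (V k)) (hmX : ∀ k, Measurable (X k))
    (hindepVX : IndepFun (fun x k => V k x) (fun x k => X k x) μ)
    {h : (ℕ → E) → ℝ≥0∞} (hh : Measurable h) (i j : ℕ) :
    ∫⁻ x, ENNReal.ofReal (stick V i x * stick V j x) * h (fun k => X k x) ∂μ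
      = (∫⁻ x, ENNReal.ofReal (stick V i x * stick V j x) ∂μ) * ∫⁻ x, h (fun k => X k x) ∂μ := by
  have hcoord : ∀ k, Measurable fun w : ℕ → ℝ => w k := measurable_pi_apply
  have hΦ : Measurable fun w : ℕ → ℝ =>
      ENNReal.ofReal (stick (fun k w => w k) i w * stick (fun k w => w k) j w) :=
    ((measurable_stick hcoord i).mul (measurable_stick hcoord j)).ennreal_ofReal
  exact lintegral_mul_eq_lintegral_mul_lintegral_of_indepFun''
    ((measurable_stick hmV i).mul (measurable_stick hmV j)).ennreal_ofReal.aemeasurable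
    (hh.comp (measurable_pi_lambda _ hmX)).aemeasurable (hindepVX.comp hΦ hh)

end StickBreaking

lemma lintegral_mul_comp_eq_ite {Ω E : Type*} [MeasurableSpace Ω] [MeasurableSpace E]
    {μ : Measure Ω} {X : ℕ → Ω → E} (hmX : ∀ k, Measurable (X k))
    (hid : ∀ k, μ.map (X k) = μ.map (X 0))
    (hpair : ∀ k1 k2, k1 ≠ k2 →
      μ.map (fun x => (X k1 x, X k2 x)) = μ.map (fun x => (X 0 x, X 1 x)))
    {f1 f2 : E → ℝ≥0∞} (hf1 : Measurable f1) (hf2 : Measurable f2) (i j : ℕ) :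
    ∫⁻ x, f1 (X i x) * f2 (X j x) ∂μ
      = if i = j then ∫⁻ x, f1 (X 0 x) * f2 (X 0 x) ∂μ else ∫⁻ x, f1 (X 0 x) * f2 (X 1 x) ∂μ := by
  split_ifs with hij
  · subst hij
    have hF : Measurable fun e => f1 e * f2 e := hf1.mul hf2
    rw [← lintegral_map hF (hmX i), hid i, lintegral_map hF (hmX 0)]
  · have hF : Measurable fun e : E × E => f1 e.1 * f2 e.2 := by fun_prop
    rw [← lintegral_map hF ((hmX i).prodMk (hmX j)), hpair i j hij,
      lintegral_map hF ((hmX 0).prodMk (hmX 1))]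

/-- mixed-moment identity, Proposition 1: for GEM(α) weights (π_k)
independent of an identically distributed, pairwise exchangeable sequence (X_k),
`E[∑_{k1,k2} π_{k1} π_{k2} f1(X_{k1}) f2(X_{k2})]
  = q1 E[f1(X_0) f2(X_0)] + (1-q1) E[f1(X_0) f2(X_1)]` with `q1 = 1/(1+α)`. -/
theorem cam_mixed_moments {Ω E : Type*} [MeasurableSpace Ω] [MeasurableSpace E]
    (μ : Measure Ω) [IsProbabilityMeasure μ]
    (α : ℝ) (hα : 0 < α) (V : ℕ → Ω → ℝ) (X : ℕ → Ω → E)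
    (hmV : ∀ k, Measurable (V k)) (hmX : ∀ k, Measurable (X k))
    (hlawV : ∀ k, μ.map (V k) = betaOne α)
    (hindepV : iIndepFun V μ)
    (hindepVX : IndepFun (fun x k => V k x) (fun x k => X k x) μ)
    (hid : ∀ k, μ.map (X k) = μ.map (X 0))
    (hpair : ∀ k1 k2, k1 ≠ k2 →
      μ.map (fun x => (X k1 x, X k2 x)) = μ.map (fun x => (X 0 x, X 1 x)))
    (f1 f2 : E → ℝ≥0∞) (hf1 : Measurable f1) (hf2 : Measurable f2) :
    ∫⁻ x, ∑' (k1 : ℕ) (k2 : ℕ),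
        ENNReal.ofReal (stick V k1 x * stick V k2 x) * (f1 (X k1 x) * f2 (X k2 x)) ∂μ
      = ENNReal.ofReal (1 / (1 + α)) * ∫⁻ x, f1 (X 0 x) * f2 (X 0 x) ∂μ
        + ENNReal.ofReal (1 - 1 / (1 + α)) * ∫⁻ x, f1 (X 0 x) * f2 (X 1 x) ∂μ := by
  have hf : ∀ i j, Measurable fun w : ℕ → E => f1 (w i) * f2 (w j) := fun i j => by fun_prop
  have hm : ∀ i j, Measurable fun x =>
      ENNReal.ofReal (stick V i x * stick V j x) * (f1 (X i x) * f2 (X j x)) := fun i j =>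
    ((measurable_stick hmV i).mul (measurable_stick hmV j)).ennreal_ofReal.mul
      ((hf i j).comp (measurable_pi_lambda _ hmX))
  have hterm : ∀ i j,
      ∫⁻ x, ENNReal.ofReal (stick V i x * stick V j x) * (f1 (X i x) * f2 (X j x)) ∂μ
        = (∫⁻ x, ENNReal.ofReal (stick V i x * stick V j x) ∂μ)
          * (if i = j then ∫⁻ x, f1 (X 0 x) * f2 (X 0 x) ∂μ
              else ∫⁻ x, f1 (X 0 x) * f2 (X 1 x) ∂μ) :=
    fun i j => by
      rw [← lintegral_mul_comp_eq_ite hmX hid hpair hf1 hf2]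
      exact lintegral_ofReal_stick_mul_mul hmV hmX hindepVX (hf i j) i j
  rw [lintegral_tsum fun i => (Measurable.tsum fun j => hm i j).aemeasurable]
  simp_rw [lintegral_tsum fun j => (hm _ j).aemeasurable, hterm, ENNReal.tsum_tsum_mul_ite_eq]
  rw [tsum_lintegral_ofReal_stick_mul_self hα hmV hindepV hlawV,
    tsum_tsum_lintegral_ofReal_stick_mul_of_ne hα hmV hindepV hlawV]
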